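/- Correctness of the reduction from punctual reachability games to reachability games on increasing temporal graphs: let G = (V, E) be a static game with V partitioned into V₁, V₂, let v ∈ V be a vertex with no outgoing edges, and let T ∈ ℕ. Define the temporal game G' on V' = V ∪ {w, ⊤, ⊥} (three fresh vertices) with V'₁ = V₁ ∪ {v} and V'₂ = V' ∖ V'₁ (so w, ⊤, ⊥ ∈ V'₂), and edge availabilities: for each (s,t) ∈ E, s →_x t at all times x; v →_x ⊥ at all times; v →_x w iff x ≥ T; w →_x ⊤ at all times; w →_x ⊥ iff x ≥ T+2; ⊤ and ⊥ have no outgoing edges. Then every edge of G' is increasing, and for every u ∈ V: Player 1 wins the temporal reachability game on G' with target set {⊤} from position (u, 0) if and only if Player 1 wins the punctual reachability game on G with target vertex v and target time T from u. -/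

import Mathlib

/-!
A temporal graph: vertex set `V`, time-indexed edge relation `E t u v` (edge from `u` to `v`
available at time `t`).  `P1 v` means vertex `v` is controlled by Player 1.  A play from
position `(u,k)` is a maximal sequence of positions `(v₀,k), (v₁,k+1), …` following available
edges, where the owner of the current vertex chooses the next one; the play halts at a
position whose owner has no available edge.

`P1WinsReach E P1 F u k` : Player 1 wins the reachability game with target set `F` from
position `(u, k)`, i.e. she has a strategy (assigning to each position `(v,t)` with `v ∈ V₁`
that has at least one available edge an available successor) such that every maximal play
from `(u,k)` consistent with it — infinite, or halting at a position with no available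
edge — visits `F`.
-/
def P1WinsReach {V : Type*} (E : ℕ → V → V → Prop) (P1 : V → Prop) (F : Set V)
    (u : V) (k : ℕ) : Prop :=
  ∃ σ : V → ℕ → V,
    (∀ (v : V) (t : ℕ), k ≤ t → P1 v → (∃ w, E t v w) → E t v (σ v t)) ∧
    (∀ ρ : ℕ → V, ρ 0 = u →
      (∀ i, E (k + i) (ρ i) (ρ (i + 1))) →
      (∀ i, P1 (ρ i) → ρ (i + 1) = σ (ρ i) (k + i)) →
      ∃ i, ρ i ∈ F) ∧
    (∀ (ρ : ℕ → V) (n : ℕ), ρ 0 = u →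
      (∀ i < n, E (k + i) (ρ i) (ρ (i + 1))) →
      (∀ i < n, P1 (ρ i) → ρ (i + 1) = σ (ρ i) (k + i)) →
      (∀ w, ¬ E (k + n) (ρ n) w) →
      ∃ i ≤ n, ρ i ∈ F)

/-!
`PunctualWins Es P1 v T u` : in the punctual reachability game on the static game with
edge relation `Es` (Player-1 vertices given by `P1`), target vertex `v` and target time
`T`, Player 1 wins from `u`: she has a strategy (assigning to each position `(s,t)` with
`s ∈ V₁` that has an outgoing edge one of its successors) such that every maximal play
from `u` at time `0` consistent with it — infinite, or halting at a vertex with no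
outgoing edge — visits `v` at time exactly `T`.
-/
def PunctualWins {V : Type*} (Es : V → V → Prop) (P1 : V → Prop) (v : V) (T : ℕ)
    (u : V) : Prop :=
  ∃ σ : V → ℕ → V,
    (∀ (s : V) (t : ℕ), P1 s → (∃ w, Es s w) → Es s (σ s t)) ∧
    (∀ ρ : ℕ → V, ρ 0 = u →
      (∀ i, Es (ρ i) (ρ (i + 1))) →
      (∀ i, P1 (ρ i) → ρ (i + 1) = σ (ρ i) i) →
      ρ T = v) ∧
    (∀ (ρ : ℕ → V) (n : ℕ), ρ 0 = u →
      (∀ i < n, Es (ρ i) (ρ (i + 1))) →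
      (∀ i < n, P1 (ρ i) → ρ (i + 1) = σ (ρ i) i) →
      (∀ w, ¬ Es (ρ n) w) →
      T ≤ n ∧ ρ T = v)

/-!
Reduction from a punctual reachability game on a static game `G = (V, Es)` with target
vertex `v` (having no outgoing edges) and target time `T` to a reachability game on an
increasing temporal graph `G'`.  The vertex set of `G'` is `V ⊕ Fin 3`, with the three
fresh vertices `w = Sum.inr 0`, `⊤ = Sum.inr 1`, `⊥ = Sum.inr 2`.

Edge availabilities (`incE`): for each edge `(s,t)` of `G`, `s →_x t` at all times `x`;
`v →_x ⊥` at all times; `v →_x w` iff `x ≥ T`; `w →_x ⊤` at all times; `w →_x ⊥` iff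
`x ≥ T+2`; `⊤` and `⊥` have no outgoing edges.

Ownership (`incP1`): `V'₁ = V₁ ∪ {v}`, and `w, ⊤, ⊥` all belong to `V'₂`.
-/
def incE {V : Type*} (Es : V → V → Prop) (v : V) (T : ℕ) :
    ℕ → (V ⊕ Fin 3) → (V ⊕ Fin 3) → Prop := fun x a b =>
  match a, b with
  | Sum.inl s, Sum.inl t => Es s t
  | Sum.inl s, Sum.inr j => s = v ∧ (j = (2 : Fin 3) ∨ (j = (0 : Fin 3) ∧ T ≤ x))
  | Sum.inr j, Sum.inr j' =>
      j = (0 : Fin 3) ∧ (j' = (1 : Fin 3) ∨ (j' = (2 : Fin 3) ∧ T + 2 ≤ x))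
  | Sum.inr _, Sum.inl _ => False

def incP1 {V : Type*} (P1 : V → Prop) (v : V) : (V ⊕ Fin 3) → Prop := fun a =>
  match a with
  | Sum.inl s => P1 s ∨ s = v
  | Sum.inr _ => False


/-!
Edges of `G` are always available and the gadget edges only appear over time, so `G'` is
increasing. The plays of `G'` that stay in `V` are the plays of `G`, and a play can leave `V`
only from `v`, which has no edge in `G`. From `v` Player 1 must move to `w` exactly at time `T`:
before that the edge is missing, moving to `⊥` loses, and reaching `w` at a time `≥ T + 2` lets
Player 2 escape to `⊥`. Hence a winning strategy in `G'`, read on `V`, wins the punctual game,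
and a punctually winning strategy, extended by "at `v` go to `w` at time `T`, else to `⊥`",
wins in `G'`.
-/

open Function

section TemporalGames

variable {V : Type*} {E : ℕ → V → V → Prop} {P1 : V → Prop} {σ : V → ℕ → V} {k : ℕ}

def IsConsistentPrefix (E : ℕ → V → V → Prop) (P1 : V → Prop) (σ : V → ℕ → V) (k : ℕ)
    (ρ : ℕ → V) (n : ℕ) : Prop :=
  ∀ i < n, E (k + i) (ρ i) (ρ (i + 1)) ∧ (P1 (ρ i) → ρ (i + 1) = σ (ρ i) (k + i))

namespace IsConsistentPrefix

variable {ρ ρ' : ℕ → V} {m n : ℕ}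

lemma mono (h : IsConsistentPrefix E P1 σ k ρ n) (hmn : m ≤ n) :
    IsConsistentPrefix E P1 σ k ρ m :=
  fun i hi => h i (hi.trans_le hmn)

lemma congr (h : IsConsistentPrefix E P1 σ k ρ n) (hρ : ∀ i ≤ n, ρ i = ρ' i) :
    IsConsistentPrefix E P1 σ k ρ' n := by
  intro i hi
  rw [← hρ i hi.le, ← hρ (i + 1) hi]
  exact h i hi

lemma update_succ (h : IsConsistentPrefix E P1 σ k ρ n) {b : V} (hE : E (k + n) (ρ n) b)
    (hσ : P1 (ρ n) → b = σ (ρ n) (k + n)) :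
    IsConsistentPrefix E P1 σ k (update ρ (n + 1) b) (n + 1) := by
  intro i hi
  rw [update_of_ne (by omega), update_apply]
  rcases Nat.lt_succ_iff_lt_or_eq.1 hi with hi | rfl
  · rw [if_neg (by omega)]
    exact h i hi
  · rw [if_pos rfl]
    exact ⟨hE, hσ⟩

end IsConsistentPrefix

lemma isConsistentPrefix_iff {ρ : ℕ → V} {n : ℕ} :
    IsConsistentPrefix E P1 σ k ρ n ↔
      (∀ i < n, E (k + i) (ρ i) (ρ (i + 1))) ∧
        (∀ i < n, P1 (ρ i) → ρ (i + 1) = σ (ρ i) (k + i)) := by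
  simp only [IsConsistentPrefix, imp_and, forall_and]

lemma forall_isConsistentPrefix_iff {ρ : ℕ → V} :
    (∀ n, IsConsistentPrefix E P1 σ k ρ n) ↔
      (∀ i, E (k + i) (ρ i) (ρ (i + 1))) ∧ (∀ i, P1 (ρ i) → ρ (i + 1) = σ (ρ i) (k + i)) := by
  rw [← forall_and]
  exact ⟨fun h i => h (i + 1) i i.lt_succ_self, fun h _ i _ => h i⟩

theorem p1WinsReach_iff {F : Set V} {u : V} :
    P1WinsReach E P1 F u k ↔ ∃ σ : V → ℕ → V,
      (∀ v t, k ≤ t → P1 v → (∃ w, E t v w) → E t v (σ v t)) ∧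
      (∀ ρ, ρ 0 = u → (∀ n, IsConsistentPrefix E P1 σ k ρ n) → ∃ i, ρ i ∈ F) ∧
      (∀ ρ n, ρ 0 = u → IsConsistentPrefix E P1 σ k ρ n →
        (∀ w, ¬ E (k + n) (ρ n) w) → ∃ i ≤ n, ρ i ∈ F) := by
  simp only [forall_isConsistentPrefix_iff]
  simp only [P1WinsReach, isConsistentPrefix_iff, and_imp]

theorem punctualWins_iff {Es : V → V → Prop} {v : V} {T : ℕ} {u : V} :
    PunctualWins Es P1 v T u ↔ ∃ σ : V → ℕ → V,
      (∀ s t, P1 s → (∃ w, Es s w) → Es s (σ s t)) ∧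
      (∀ ρ, ρ 0 = u → (∀ n, IsConsistentPrefix (fun _ => Es) P1 σ 0 ρ n) → ρ T = v) ∧
      (∀ ρ n, ρ 0 = u → IsConsistentPrefix (fun _ => Es) P1 σ 0 ρ n →
        (∀ w, ¬ Es (ρ n) w) → T ≤ n ∧ ρ T = v) := by
  simp only [forall_isConsistentPrefix_iff]
  simp only [PunctualWins, isConsistentPrefix_iff, and_imp, zero_add]

end TemporalGames

lemma Sum.exists_last_inl {α β : Type*} {ρ : ℕ → α ⊕ β} {a : α} (h0 : ρ 0 = .inl a) (n : ℕ) :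
    ∃ m ≤ n, (∀ i ≤ m, ∃ s, ρ i = .inl s) ∧ (m = n ∨ m < n ∧ ∃ j, ρ (m + 1) = .inr j) := by
  induction n with
  | zero => exact ⟨0, le_rfl, fun i hi => ⟨a, by rwa [Nat.le_zero.1 hi]⟩, .inl rfl⟩
  | succ n ih =>
    obtain ⟨m, hmn, hinl, rfl | ⟨hmn', hexit⟩⟩ := ih
    · rcases hnext : ρ (m + 1) with s | j
      · refine ⟨m + 1, le_rfl, fun i hi => ?_, .inl rfl⟩
        rcases hi.lt_or_eq with hi | rfl
        exacts [hinl i (by omega), ⟨s, hnext⟩]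
      · exact ⟨m, by omega, hinl, .inr ⟨by omega, j, hnext⟩⟩
    · exact ⟨m, by omega, hinl, .inr ⟨by omega, hexit⟩⟩

section Reduction

variable {V : Type*} {Es : V → V → Prop} {P1 : V → Prop} {v : V} {T x : ℕ}

@[simp] lemma incE_inl_inl {s t : V} : incE Es v T x (.inl s) (.inl t) ↔ Es s t := Iff.rfl

@[simp] lemma incE_inl_inr {s : V} {j : Fin 3} :
    incE Es v T x (.inl s) (.inr j) ↔ s = v ∧ (j = 2 ∨ j = 0 ∧ T ≤ x) := Iff.rfl

@[simp] lemma not_incE_inr_inl {j : Fin 3} {s : V} : ¬ incE Es v T x (.inr j) (.inl s) := id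

@[simp] lemma incE_inr_inr {j j' : Fin 3} :
    incE Es v T x (.inr j) (.inr j') ↔ j = 0 ∧ (j' = 1 ∨ j' = 2 ∧ T + 2 ≤ x) := Iff.rfl

@[simp] lemma incP1_inl {s : V} : incP1 P1 v (.inl s) ↔ P1 s ∨ s = v := Iff.rfl

@[simp] lemma not_incP1_inr {j : Fin 3} : ¬ incP1 P1 v (.inr j) := id

lemma incE.succ {a b : V ⊕ Fin 3} (h : incE Es v T x a b) : incE Es v T (x + 1) a b := by
  rcases a with s | j <;> rcases b with t | j' <;> simp only [incE_inl_inl, incE_inl_inr,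
    not_incE_inr_inl, incE_inr_inr] at h ⊢ <;> grind

lemma forall_not_incE_inr_two (b : V ⊕ Fin 3) : ¬ incE Es v T x (.inr 2) b := by
  rcases b with t | j <;> simp

lemma eq_inr_one_of_incE_inr_zero {b : V ⊕ Fin 3} (h : incE Es v T x (.inr 0) b)
    (hx : x < T + 2) : b = .inr 1 := by
  rcases b with t | j
  · exact (not_incE_inr_inl h).elim
  · simp only [incE_inr_inr, true_and] at h
    rcases h with rfl | ⟨-, hTx⟩
    exacts [rfl, absurd hTx (by omega)]

lemma exists_eq_inl_of_incE_of_incE {y : ℕ} {a b c : V ⊕ Fin 3} (hab : incE Es v T x a b)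
    (hbc : incE Es v T y b c) : ∃ s, a = .inl s := by
  rcases a with s | j
  · exact ⟨s, rfl⟩
  rcases b with t | j'
  · exact (not_incE_inr_inl hab).elim
  rcases c with r | j''
  · exact (not_incE_inr_inl hbc).elim
  simp only [incE_inr_inr] at hab hbc
  grind

lemma forall_not_incE_inl_iff {s : V} :
    (∀ b, ¬ incE Es v T x (.inl s) b) ↔ (∀ t, ¬ Es s t) ∧ s ≠ v := by
  refine ⟨fun h => ⟨fun t => h (.inl t), fun hs => h (.inr 2) ⟨hs, .inl rfl⟩⟩, ?_⟩
  rintro ⟨hs, hsv⟩ (t | j) h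
  exacts [hs t h, hsv h.1]

lemma isConsistentPrefix_comp_inl_iff (hv : ∀ t, ¬ Es v t) {σ : V → ℕ → V}
    {σ' : V ⊕ Fin 3 → ℕ → V ⊕ Fin 3}
    (hσ : ∀ s t, P1 s → (∃ w, Es s w) → σ' (.inl s) t = .inl (σ s t)) {ρ : ℕ → V} {n : ℕ} :
    IsConsistentPrefix (incE Es v T) (incP1 P1 v) σ' 0 (.inl ∘ ρ) n ↔
      IsConsistentPrefix (fun _ => Es) P1 σ 0 ρ n := by
  refine forall₂_congr fun i _ => ?_
  simp only [comp_apply, incE_inl_inl, incP1_inl, zero_add]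
  refine and_congr_right fun hE => ⟨fun hC hP => ?_, ?_⟩
  · exact Sum.inl_injective ((hC (.inl hP)).trans (hσ _ _ hP ⟨_, hE⟩))
  · rintro hC (hP | rfl)
    · rw [hσ _ _ hP ⟨_, hE⟩, hC hP]
    · exact (hv _ hE).elim

def restrictStrategy (σ' : V ⊕ Fin 3 → ℕ → V ⊕ Fin 3) (s : V) (t : ℕ) : V :=
  (σ' (.inl s) t).elim id fun _ => s

lemma restrictStrategy_spec (hv : ∀ t, ¬ Es v t) {σ' : V ⊕ Fin 3 → ℕ → V ⊕ Fin 3}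
    (hσ' : ∀ a t, incP1 P1 v a → (∃ b, incE Es v T t a b) → incE Es v T t a (σ' a t))
    {s : V} {t : ℕ} (hs : P1 s) (hedge : ∃ w, Es s w) :
    σ' (.inl s) t = .inl (restrictStrategy σ' s t) := by
  obtain ⟨w, hw⟩ := hedge
  have hmove := hσ' (.inl s) t (.inl hs) ⟨.inl w, hw⟩
  rcases h : σ' (.inl s) t with r | j
  · simp [restrictStrategy, h]
  · rw [h, incE_inl_inr] at hmove
    exact (hv w (hmove.1 ▸ hw)).elim

lemma eq_of_winning_prefix_at_target (hv : ∀ t, ¬ Es v t) {σ' : V ⊕ Fin 3 → ℕ → V ⊕ Fin 3}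
    (hσ' : ∀ a t, incP1 P1 v a → (∃ b, incE Es v T t a b) → incE Es v T t a (σ' a t))
    {ρ' : ℕ → V ⊕ Fin 3}
    (hwin : ∀ ρ m, ρ 0 = ρ' 0 → IsConsistentPrefix (incE Es v T) (incP1 P1 v) σ' 0 ρ m →
      (∀ b, ¬ incE Es v T (0 + m) (ρ m) b) → ∃ i ≤ m, ρ i ∈ ({.inr 1} : Set (V ⊕ Fin 3)))
    {n : ℕ} (hρ' : IsConsistentPrefix (incE Es v T) (incP1 P1 v) σ' 0 ρ' n)
    (hn : ρ' n = .inl v) (htop : ∀ i ≤ n, ρ' i ≠ .inr 1) : n = T := by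
  have hbot : ∀ (ρ : ℕ → V ⊕ Fin 3) m, ρ 0 = ρ' 0 →
      IsConsistentPrefix (incE Es v T) (incP1 P1 v) σ' 0 ρ m → ρ m = .inr 2 →
      (∀ i < m, ρ i ≠ .inr 1) → False := by
    intro ρ m h0 hρ hm hρtop
    obtain ⟨i, him, hi⟩ := hwin ρ m h0 hρ (hm ▸ forall_not_incE_inr_two)
    rcases him.lt_or_eq with him | rfl
    exacts [hρtop i him hi, by simp [hm] at hi]
  have hmove := hσ' (.inl v) n (.inr rfl) ⟨.inr 2, rfl, .inl rfl⟩
  rcases hb : σ' (.inl v) n with t | j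
  · rw [hb] at hmove
    exact (hv t hmove).elim
  rw [hb, incE_inl_inr] at hmove
  have hρ₁ := hρ'.update_succ (b := .inr j) (by simpa [hn] using hmove)
    (fun _ => by rw [hn, zero_add, hb])
  have hρ₁top : ∀ i ≤ n + 1, update ρ' (n + 1) (.inr j) i ≠ .inr 1 := fun i hi => by
    rw [update_apply]
    split_ifs
    · rcases hmove.2 with rfl | ⟨rfl, -⟩ <;> simp
    · exact htop i (by omega)
  rcases hmove.2 with rfl | ⟨rfl, hTn⟩
  · exact (hbot _ _ (update_of_ne (by omega) _ _) hρ₁ (update_self ..)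
      fun i hi => hρ₁top i hi.le).elim
  · by_contra hne
    -- at time `n + 1 ≥ T + 2` Player 2 can leave `w` for `⊥`
    have hρ₂ := hρ₁.update_succ (b := .inr 2)
      (by simpa using lt_of_le_of_ne hTn (Ne.symm hne)) (by simp)
    refine hbot _ _ ?_ hρ₂ (update_self ..) fun i hi => ?_
    · rw [update_of_ne (by omega), update_of_ne (by omega)]
    · rw [update_apply]
      split_ifs
      exacts [by simp, hρ₁top i (by omega)]

theorem punctualWins_of_p1WinsReach (hv : ∀ t, ¬ Es v t) {u : V}
    (h : P1WinsReach (incE Es v T) (incP1 P1 v) {.inr 1} (.inl u) 0) :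
    PunctualWins Es P1 v T u := by
  obtain ⟨σ', hσ', hinf, hfin⟩ := p1WinsReach_iff.1 h
  replace hσ' := fun a t => hσ' a t t.zero_le
  have hσ : ∀ s t, P1 s → (∃ w, Es s w) → σ' (.inl s) t = .inl (restrictStrategy σ' s t) :=
    fun _ _ => restrictStrategy_spec hv hσ'
  have hlift := fun ρ n => (isConsistentPrefix_comp_inl_iff (T := T) hv hσ (ρ := ρ) (n := n)).2
  refine punctualWins_iff.2 ⟨restrictStrategy σ', fun s t hs hedge => ?_,
    fun ρ h0 hρ => ?_, fun ρ n h0 hρ hhalt => ?_⟩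
  · simpa [hσ s t hs hedge] using
      hσ' (.inl s) t (.inl hs) (hedge.elim fun w hw => ⟨.inl w, hw⟩)
  · obtain ⟨i, hi⟩ := hinf _ (by simp [h0]) fun n => hlift ρ n (hρ n)
    simp at hi
  · by_cases hn : ρ n = v
    · have hnT := eq_of_winning_prefix_at_target hv hσ'
        (fun ρ' m h0' => hfin ρ' m (by simp [h0', h0])) (hlift ρ n hρ) (by simp [hn]) (by simp)
      exact ⟨hnT.ge, hnT ▸ hn⟩
    · obtain ⟨i, -, hi⟩ := hfin _ n (by simp [h0]) (hlift ρ n hρ)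
        (forall_not_incE_inl_iff.2 ⟨hhalt, hn⟩)
      simp at hi

/-- The vertices `Sum.inr j` belong to Player 2, so the value there is irrelevant. -/
noncomputable def gadgetStrategy (σ : V → ℕ → V) (v : V) (T : ℕ) :
    V ⊕ Fin 3 → ℕ → V ⊕ Fin 3
  | .inl s, t => open Classical in
      if s = v then (if t = T then .inr 0 else .inr 2) else .inl (σ s t)
  | .inr j, _ => .inr j

lemma gadgetStrategy_inl_of_ne {σ : V → ℕ → V} {s : V} (hs : s ≠ v) (t : ℕ) :
    gadgetStrategy σ v T (.inl s) t = .inl (σ s t) := by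
  simp [gadgetStrategy, hs]

lemma gadgetStrategy_inl_self {σ : V → ℕ → V} :
    gadgetStrategy σ v T (.inl v) T = .inr 0 := by
  simp [gadgetStrategy]

lemma gadgetStrategy_agrees (hv : ∀ t, ¬ Es v t) (σ : V → ℕ → V) (s : V) (t : ℕ)
    (hedge : ∃ w, Es s w) : gadgetStrategy σ v T (.inl s) t = .inl (σ s t) := by
  obtain ⟨w, hw⟩ := hedge
  exact gadgetStrategy_inl_of_ne (by rintro rfl; exact hv w hw) t

lemma gadgetStrategy_valid (hv : ∀ t, ¬ Es v t) {σ : V → ℕ → V}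
    (hσ : ∀ s t, P1 s → (∃ w, Es s w) → Es s (σ s t)) (a : V ⊕ Fin 3) (t : ℕ)
    (ha : incP1 P1 v a) (hedge : ∃ b, incE Es v T t a b) :
    incE Es v T t a (gadgetStrategy σ v T a t) := by
  rcases a with s | j
  · by_cases hs : s = v
    · subst hs
      by_cases ht : t = T <;> simp [gadgetStrategy, ht]
    · obtain ⟨b, hb⟩ := hedge
      rcases b with r | j
      · rw [gadgetStrategy_inl_of_ne hs]
        exact hσ s t ((incP1_inl.1 ha).resolve_right hs) ⟨r, hb⟩
      · exact (hs (incE_inl_inr.1 hb).1).elim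
  · exact (not_incP1_inr ha).elim

lemma exists_top_of_gadgetStrategy_halting (hv : ∀ t, ¬ Es v t) {σ : V → ℕ → V} {u : V}
    (hfin : ∀ ρ n, ρ 0 = u → IsConsistentPrefix (fun _ => Es) P1 σ 0 ρ n →
      (∀ w, ¬ Es (ρ n) w) → T ≤ n ∧ ρ T = v)
    {ρ' : ℕ → V ⊕ Fin 3} {n : ℕ} (h0 : ρ' 0 = .inl u)
    (hρ' : IsConsistentPrefix (incE Es v T) (incP1 P1 v) (gadgetStrategy σ v T) 0 ρ' n)
    (hhalt : ∀ b, ¬ incE Es v T (0 + n) (ρ' n) b) : ∃ i ≤ n, ρ' i = .inr 1 := by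
  by_contra! htop
  obtain ⟨m, hmn, hinl, hm⟩ := Sum.exists_last_inl h0 n
  have : Nonempty V := ⟨u⟩
  choose! ρ hρ using hinl
  have hρm := (isConsistentPrefix_comp_inl_iff hv fun s t _ =>
    gadgetStrategy_agrees hv σ s t).1 ((hρ'.mono hmn).congr hρ)
  have hhaltm : ∀ w, ¬ Es (ρ m) w := by
    rcases hm with rfl | ⟨hmn, j, hj⟩
    · exact (forall_not_incE_inl_iff.1 (by simpa [hρ m le_rfl] using hhalt)).1
    · have hexit := (hρ' m hmn).1
      rw [hρ m le_rfl, hj, incE_inl_inr] at hexit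
      exact hexit.1 ▸ hv
  obtain ⟨hTm, hρT⟩ := hfin ρ m (Sum.inl_injective ((hρ 0 m.zero_le).symm.trans h0)) hρm hhaltm
  obtain rfl : m = T :=
    (hTm.lt_or_eq.resolve_left fun hlt => hv _ (hρT ▸ (hρm T hlt).1)).symm
  rcases hm with rfl | ⟨hmn, j, -⟩
  · exact hhalt (.inr 2) (by simp [hρ m le_rfl, hρT])
  have hw : ρ' (m + 1) = .inr 0 := by
    rw [(hρ' m hmn).2 (by simp [hρ m le_rfl, hρT]), hρ m le_rfl, hρT, zero_add,
      gadgetStrategy_inl_self]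
  rcases (Nat.succ_le_of_lt hmn).eq_or_lt with rfl | hmn'
  · exact hhalt (.inr 1) (by simp [hw])
  · have hnext := (hρ' (m + 1) hmn').1
    rw [hw] at hnext
    exact htop (m + 2) (by omega) (eq_inr_one_of_incE_inr_zero hnext (by omega))

theorem p1WinsReach_of_punctualWins (hv : ∀ t, ¬ Es v t) {u : V}
    (h : PunctualWins Es P1 v T u) :
    P1WinsReach (incE Es v T) (incP1 P1 v) {.inr 1} (.inl u) 0 := by
  obtain ⟨σ, hσ, hinf, hfin⟩ := punctualWins_iff.1 h
  refine p1WinsReach_iff.2 ⟨gadgetStrategy σ v T, fun a t _ => gadgetStrategy_valid hv hσ a t,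
    fun ρ' h0 hρ' => ?_, fun ρ' n h0 hρ' hhalt => ?_⟩
  · exfalso
    -- the gadget has no path of length two, so an infinite play stays in `V`
    choose ρ hρ using fun i => exists_eq_inl_of_incE_of_incE
      (hρ' (i + 2) i (by omega)).1 (hρ' (i + 2) (i + 1) (by omega)).1
    obtain rfl : ρ' = .inl ∘ ρ := funext hρ
    have hproj := fun n => (isConsistentPrefix_comp_inl_iff hv fun s t _ =>
      gadgetStrategy_agrees hv σ s t).1 (hρ' n)
    exact hv _ (hinf ρ (Sum.inl_injective h0) hproj ▸ (hproj (T + 1) T T.lt_succ_self).1)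
  · simpa using exists_top_of_gadgetStrategy_halting hv hfin h0 hρ' hhalt

end Reduction

/-- Correctness of the reduction from punctual reachability games to reachability games on
increasing temporal graphs: every edge of `G'` is increasing, and for every `u ∈ V`,
Player 1 wins the temporal reachability game on `G'` with target set `{⊤}` from `(u, 0)`
iff she wins the punctual reachability game on `G` with target vertex `v` and target
time `T` from `u`. -/
theorem punctual_to_increasing_reduction
    {V : Type*} (Es : V → V → Prop) (P1 : V → Prop) (v : V)
    (hv : ∀ t : V, ¬ Es v t) (T : ℕ) :
    (∀ (a b : V ⊕ Fin 3) (x : ℕ), incE Es v T x a b → incE Es v T (x + 1) a b) ∧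
    (∀ u : V,
      P1WinsReach (incE Es v T) (incP1 P1 v) {Sum.inr (1 : Fin 3)} (Sum.inl u) 0 ↔
      PunctualWins Es P1 v T u) :=
  ⟨fun _ _ _ => incE.succ,
    fun _ => ⟨punctualWins_of_p1WinsReach hv, p1WinsReach_of_punctualWins hv⟩⟩
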